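/- For every α ∈ (0,1) and distinct indices i ≠ j, the entry ((I − αS)^{-1})_{ij} is strictly positive if i and j are connected, and equals zero if i and j are not connected. -/

import Mathlib

open Matrix BigOperators Finset

attribute [local instance] Classical.propDecidable

/-- Row sum `d_i = Σ_j A_{ij}` of the affinity matrix. -/
noncomputable def rowSum {n : ℕ} (A : Matrix (Fin n) (Fin n) ℝ) (i : Fin n) : ℝ :=
  ∑ j, A i j

/-- The normalized matrix `S = D^{-1/2} A D^{-1/2}`. -/
noncomputable def Smat {n : ℕ} (A : Matrix (Fin n) (Fin n) ℝ) : Matrix (Fin n) (Fin n) ℝ :=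
  Matrix.diagonal (fun i => (Real.sqrt (rowSum A i))⁻¹) * A *
    Matrix.diagonal (fun i => (Real.sqrt (rowSum A i))⁻¹)

/-- Label matrix `Y` (indices `i` with `(i : ℕ) < l` are the labeled ones). -/
noncomputable def Ymat {n K : ℕ} (l : ℕ) (y : Fin n → Fin K) : Matrix (Fin n) (Fin K) ℝ :=
  fun i c => if (i : ℕ) < l ∧ y i = c then 1 else 0

/-- `F* = (I - α S)^{-1} Y`. -/
noncomputable def Fstar {n K : ℕ} (l : ℕ) (y : Fin n → Fin K) (α : ℝ)
    (A : Matrix (Fin n) (Fin n) ℝ) : Matrix (Fin n) (Fin K) ℝ :=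
  (1 - α • Smat A)⁻¹ * Ymat l y

/-- Instance `i` is correctly predicted: `F*_{i, y_i} > F*_{i, c}` for all `c ≠ y_i`. -/
def CorrectlyPredicted {n K : ℕ} (l : ℕ) (y : Fin n → Fin K) (α : ℝ)
    (A : Matrix (Fin n) (Fin n) ℝ) (i : Fin n) : Prop :=
  ∀ c : Fin K, c ≠ y i → Fstar l y α A i c < Fstar l y α A i (y i)

/-- Accuracy on the unlabeled instances (those with `(i : ℕ) ≥ l`). -/
noncomputable def AccLP {n K : ℕ} (l : ℕ) (y : Fin n → Fin K) (α : ℝ)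
    (A : Matrix (Fin n) (Fin n) ℝ) : ℝ :=
  ((Finset.univ.filter
      (fun i : Fin n => l ≤ (i : ℕ) ∧ CorrectlyPredicted l y α A i)).card : ℝ) /
    ((n : ℝ) - (l : ℝ))

/-- `i` and `j` are connected w.r.t. `B`: a finite sequence of at least one step
with positive affinities joins them. -/
def Connected {n : ℕ} (B : Matrix (Fin n) (Fin n) ℝ) : Fin n → Fin n → Prop :=
  Relation.TransGen (fun i j => 0 < B i j)

/-!
Write `P = D⁻¹A` for the row-stochastic transition matrix. Then `S = D^{1/2} P D^{-1/2}`, so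
`(I - αS)⁻¹ = D^{1/2} (I - αP)⁻¹ D^{-1/2}` and the signs of the entries are those of
`(I - αP)⁻¹`. As `‖αP‖_∞ ≤ α < 1`, the latter is the Neumann series `∑ αᵏ Pᵏ` of nonnegative
matrices. Off the diagonal its `(i, j)` entry is positive iff some `Pᵏ` with `k ≥ 1` has a
positive `(i, j)` entry, i.e. iff a path of positive entries of `A` leads from `i` to `j`.
-/

attribute [local instance] Matrix.linftyOpNormedAddCommGroup Matrix.linftyOpNormedSpace
  Matrix.linftyOpNormedRing Matrix.linftyOpNormedAlgebra

namespace Matrix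

section Field

variable {ι K : Type*} [Fintype ι] [DecidableEq ι] [Field K]

theorem inv_diagonal_conj {v : ι → K} (hv : ∀ i, v i ≠ 0) (N : Matrix ι ι K) :
    (diagonal v * N * diagonal v⁻¹)⁻¹ = diagonal v * N⁻¹ * diagonal v⁻¹ := by
  have hvv : diagonal v * diagonal v⁻¹ = 1 := by
    simp [diagonal_mul_diagonal, hv]
  rw [mul_inv_rev, mul_inv_rev, inv_eq_left_inv hvv, inv_eq_right_inv hvv, mul_assoc]

end Field

section OrderedRing

variable {ι R : Type*} [Fintype ι] [DecidableEq ι] [Ring R] [LinearOrder R] [IsStrictOrderedRing R]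
  {M : Matrix ι ι R}

theorem exists_pow_succ_apply_pos_iff_transGen (hM : ∀ i j, 0 ≤ M i j) {i j : ι} :
    (∃ k, 0 < (M ^ (k + 1)) i j) ↔ Relation.TransGen (fun a b => 0 < M a b) i j := by
  have pos_mul_iff {k a c b} :
      0 < (M ^ (k + 1)) a c * M c b ↔ 0 < (M ^ (k + 1)) a c ∧ 0 < M c b :=
    ⟨fun h => (pos_and_pos_or_neg_and_neg_of_mul_pos h).resolve_right
      fun h' => h'.1.not_ge (pow_apply_nonneg hM _ _ _), fun h => mul_pos h.1 h.2⟩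
  have pow_succ_succ_pos_iff {k a b} :
      0 < (M ^ (k + 1 + 1)) a b ↔ ∃ c, 0 < (M ^ (k + 1)) a c ∧ 0 < M c b := by
    rw [pow_succ, mul_apply, Finset.sum_pos_iff_of_nonneg
      (fun c _ => mul_nonneg (pow_apply_nonneg hM _ _ _) (hM _ _))]
    simp only [Finset.mem_univ, true_and, pos_mul_iff]
  constructor
  · rintro ⟨k, hk⟩
    induction k generalizing j with
    | zero => exact .single (by simpa using hk)
    | succ k ih =>
      obtain ⟨c, hic, hcj⟩ := pow_succ_succ_pos_iff.1 hk
      exact (ih hic).tail hcj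
  · intro h
    induction h with
    | single h => exact ⟨0, by simpa using h⟩
    | tail _ hcj ih =>
      obtain ⟨k, hk⟩ := ih
      exact ⟨k + 1, pow_succ_succ_pos_iff.2 ⟨_, hk, hcj⟩⟩

end OrderedRing

variable {ι : Type*} [Fintype ι] [DecidableEq ι] {M : Matrix ι ι ℝ}

theorem linfty_opNorm_le_one_of_mem_rowStochastic (hM : M ∈ rowStochastic ℝ ι) : ‖M‖ ≤ 1 := by
  rw [linfty_opNorm_def, NNReal.coe_le_one, Finset.sup_le_iff]
  intro i _
  rw [← NNReal.coe_le_one]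
  push_cast
  simp only [Real.norm_of_nonneg (nonneg_of_mem_rowStochastic hM),
    sum_row_of_mem_rowStochastic hM i, le_refl]

theorem hasSum_pow_apply_inv_one_sub (h : ‖M‖ < 1) (i j : ι) :
    HasSum (fun k => (M ^ k) i j) ((1 - M)⁻¹ i j) := by
  rw [nonsing_inv_eq_ringInverse]
  exact Pi.hasSum.1 (Pi.hasSum.1 (hasSum_geom_series_inverse M h) i) j

theorem inv_one_sub_apply_nonneg (hM : ∀ i j, 0 ≤ M i j) (h : ‖M‖ < 1) (i j : ι) :
    0 ≤ (1 - M)⁻¹ i j :=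
  (hasSum_pow_apply_inv_one_sub h i j).nonneg fun k => pow_apply_nonneg hM k i j

theorem inv_one_sub_apply_pos_iff_transGen (hM : ∀ i j, 0 ≤ M i j) (h : ‖M‖ < 1) {i j : ι}
    (hij : i ≠ j) :
    0 < (1 - M)⁻¹ i j ↔ Relation.TransGen (fun a b => 0 < M a b) i j := by
  have hsum := hasSum_pow_apply_inv_one_sub h i j
  have hterm k : 0 ≤ (M ^ k) i j := pow_apply_nonneg hM k i j
  rw [← exists_pow_succ_apply_pos_iff_transGen hM]
  constructor
  · intro hpos
    by_contra! hzero
    have hterms : (fun k => (M ^ k) i j) = 0 := by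
      ext (_ | k)
      · simp [one_apply_ne hij]
      · exact (hzero k).antisymm (hterm _)
    rw [hterms] at hsum
    exact hpos.ne' (hsum.unique hasSum_zero)
  · rintro ⟨k, hk⟩
    exact hk.trans_le (le_hasSum hsum (k + 1) fun l _ => hterm l)

end Matrix

open Matrix

noncomputable def transitionMatrix {n : ℕ} (A : Matrix (Fin n) (Fin n) ℝ) :
    Matrix (Fin n) (Fin n) ℝ :=
  diagonal (fun i => (rowSum A i)⁻¹) * A

section TransitionMatrix

variable {n : ℕ} {A : Matrix (Fin n) (Fin n) ℝ}

theorem transitionMatrix_mem_rowStochastic (hnonneg : ∀ i j, 0 ≤ A i j)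
    (hrow : ∀ i, 0 < rowSum A i) : transitionMatrix A ∈ rowStochastic ℝ (Fin n) := by
  refine mem_rowStochastic_iff_sum.2 ⟨fun i j => ?_, fun i => ?_⟩
  · simp only [transitionMatrix, diagonal_mul]
    exact mul_nonneg (inv_nonneg.2 (hrow i).le) (hnonneg i j)
  · simp only [transitionMatrix, diagonal_mul, ← Finset.mul_sum]
    exact inv_mul_cancel₀ (hrow i).ne'

theorem norm_smul_transitionMatrix_lt_one (hnonneg : ∀ i j, 0 ≤ A i j)
    (hrow : ∀ i, 0 < rowSum A i) {α : ℝ} (hα0 : 0 < α) (hα1 : α < 1) :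
    ‖α • transitionMatrix A‖ < 1 :=
  calc ‖α • transitionMatrix A‖ ≤ α * 1 := by
        rw [norm_smul, Real.norm_of_nonneg hα0.le]
        gcongr
        exact linfty_opNorm_le_one_of_mem_rowStochastic
          (transitionMatrix_mem_rowStochastic hnonneg hrow)
    _ < 1 := by linarith

theorem transGen_pos_smul_transitionMatrix_iff (hrow : ∀ i, 0 < rowSum A i) {α : ℝ}
    (hα0 : 0 < α) {i j : Fin n} :
    Relation.TransGen (fun a b => 0 < (α • transitionMatrix A) a b) i j ↔ Connected A i j := by
  have hpos a b : 0 < (α • transitionMatrix A) a b ↔ 0 < A a b := by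
    simp [transitionMatrix, diagonal_mul, mul_pos_iff_of_pos_left hα0,
      mul_pos_iff_of_pos_left (inv_pos.2 (hrow a))]
  simp only [Connected, hpos]

theorem Smat_eq_diagonal_conj_transitionMatrix (A : Matrix (Fin n) (Fin n) ℝ) :
    Smat A = diagonal (fun i => √(rowSum A i)) * transitionMatrix A *
      diagonal (fun i => √(rowSum A i))⁻¹ := by
  ext i j
  simp [Smat, transitionMatrix, diagonal_mul, mul_diagonal, ← Real.sqrt_div_self,
    div_eq_mul_inv, mul_assoc]

theorem inv_one_sub_smul_Smat_apply (hrow : ∀ i, 0 < rowSum A i) (α : ℝ) (i j : Fin n) :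
    (1 - α • Smat A)⁻¹ i j =
      √(rowSum A i) * (1 - α • transitionMatrix A)⁻¹ i j * (√(rowSum A j))⁻¹ := by
  have hsqrt i : √(rowSum A i) ≠ 0 := (Real.sqrt_pos.2 (hrow i)).ne'
  have hconj : 1 - α • Smat A = diagonal (fun i => √(rowSum A i)) *
      (1 - α • transitionMatrix A) * diagonal (fun i => √(rowSum A i))⁻¹ := by
    rw [Smat_eq_diagonal_conj_transitionMatrix, mul_sub, sub_mul, mul_one, Matrix.mul_smul,
      Matrix.smul_mul, diagonal_mul_diagonal]
    simp [hsqrt]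
  rw [hconj, inv_diagonal_conj hsqrt]
  simp [diagonal_mul, mul_diagonal]

end TransitionMatrix

theorem inverse_entry_connectivity_general
    {n : ℕ}
    (A : Matrix (Fin n) (Fin n) ℝ)
    (hnonneg : ∀ i j, 0 ≤ A i j)
    (hrow : ∀ i, 0 < rowSum A i)
    (α : ℝ) (hα0 : 0 < α) (hα1 : α < 1)
    (i j : Fin n) (hij : i ≠ j) :
    (Connected A i j → 0 < (1 - α • Smat A)⁻¹ i j) ∧
      (¬ Connected A i j → (1 - α • Smat A)⁻¹ i j = 0) := by
  have hP_nonneg a b : 0 ≤ (α • transitionMatrix A) a b :=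
    mul_nonneg hα0.le
      (nonneg_of_mem_rowStochastic (transitionMatrix_mem_rowStochastic hnonneg hrow))
  have hP_norm := norm_smul_transitionMatrix_lt_one hnonneg hrow hα0 hα1
  have hsqrt k : 0 < √(rowSum A k) := Real.sqrt_pos.2 (hrow k)
  have hpos_iff : 0 < (1 - α • Smat A)⁻¹ i j ↔ Connected A i j := by
    rw [inv_one_sub_smul_Smat_apply hrow, mul_pos_iff_of_pos_right (inv_pos.2 (hsqrt j)),
      mul_pos_iff_of_pos_left (hsqrt i),
      inv_one_sub_apply_pos_iff_transGen hP_nonneg hP_norm hij,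
      transGen_pos_smul_transitionMatrix_iff hrow hα0]
  have hentry_nonneg : 0 ≤ (1 - α • Smat A)⁻¹ i j := by
    rw [inv_one_sub_smul_Smat_apply hrow]
    have := inv_one_sub_apply_nonneg hP_nonneg hP_norm i j
    positivity
  exact ⟨hpos_iff.2, fun h => hentry_nonneg.antisymm' (not_lt.1 (mt hpos_iff.1 h))⟩

/-- for `α ∈ (0,1)` and `i ≠ j`, the off-diagonal entry of `(I - αS)⁻¹`
is strictly positive iff `i` and `j` are connected (and zero otherwise). -/
theorem inverse_entry_connectivity
    {n : ℕ} (hn : 0 < n)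
    (A : Matrix (Fin n) (Fin n) ℝ)
    (hsym : A.IsSymm) (hnonneg : ∀ i j, 0 ≤ A i j) (hdiag : ∀ i, A i i = 0)
    (hrow : ∀ i, 0 < rowSum A i)
    (α : ℝ) (hα0 : 0 < α) (hα1 : α < 1)
    (i j : Fin n) (hij : i ≠ j) :
    (Connected A i j → 0 < (1 - α • Smat A)⁻¹ i j) ∧
      (¬ Connected A i j → (1 - α • Smat A)⁻¹ i j = 0) :=
  inverse_entry_connectivity_general A hnonneg hrow α hα0 hα1 i j hij
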